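/- arXiv:1603.06600 — 8 statements merged into one kernel-verified Lean document; each statement's English description precedes it below -/
import Mathlib

section
/- The map f(λ) = λ + 1/\bar{λ} is a bijection from the set {λ ∈ ℂ : |λ| > 1} onto the set {ξ ∈ ℂ : |ξ| > 2}. -/
/-!
Since `1 / conj z = z / ‖z‖²`, the map sends `z` to the positive multiple `(1 + ‖z‖⁻²) • z`:
it keeps the direction of `z` and changes its modulus `r` into `r + r⁻¹`. The theorem thus
reduces to the fact that `r ↦ r + r⁻¹` is a bijection from `(1, ∞)` onto `(2, ∞)`.
-/

open Set

section RadialExtension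

variable {E : Type*} [NormedAddCommGroup E] [NormedSpace ℝ E]

noncomputable def radialExtension (φ : ℝ → ℝ) (x : E) : E := (φ ‖x‖ / ‖x‖) • x

theorem norm_radialExtension {φ : ℝ → ℝ} {x : E} (hx : x ≠ 0) (hφ : 0 ≤ φ ‖x‖) :
    ‖radialExtension φ x‖ = φ ‖x‖ := by
  have hx' : 0 < ‖x‖ := norm_pos_iff.mpr hx
  rw [radialExtension, norm_smul_of_nonneg (by positivity), div_mul_cancel₀ _ hx'.ne']

theorem bijOn_radialExtension {φ : ℝ → ℝ} {a b : ℝ} (ha : 0 ≤ a) (hb : 0 ≤ b)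
    (hφ : BijOn φ (Ioi a) (Ioi b)) :
    BijOn (radialExtension φ) {x : E | a < ‖x‖} {y : E | b < ‖y‖} := by
  have hne : ∀ {x : E}, a < ‖x‖ → x ≠ 0 := fun hx => norm_pos_iff.mp (ha.trans_lt hx)
  have hnorm : ∀ {x : E}, a < ‖x‖ → ‖radialExtension φ x‖ = φ ‖x‖ := fun hx =>
    norm_radialExtension (hne hx) (hb.trans (hφ.mapsTo (mem_Ioi.mpr hx)).le)
  refine ⟨fun x hx => ?_, fun x hx y hy hxy => ?_, fun y hy => ?_⟩
  · show b < ‖radialExtension φ x‖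
    exact (hnorm hx).symm ▸ hφ.mapsTo (mem_Ioi.mpr hx)
  · have hxy_norm : ‖x‖ = ‖y‖ := hφ.injOn hx hy (by rw [← hnorm hx, ← hnorm hy, hxy])
    have hc : φ ‖x‖ / ‖x‖ ≠ 0 :=
      div_ne_zero (hb.trans_lt (hφ.mapsTo (mem_Ioi.mpr hx))).ne' (norm_ne_zero_iff.mpr (hne hx))
    unfold radialExtension at hxy
    rw [← hxy_norm] at hxy
    exact smul_right_injective E hc hxy
  · obtain ⟨r, hr, hφr⟩ := hφ.surjOn hy
    have hr0 : 0 < r := ha.trans_lt hr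
    have hy0 : 0 < ‖y‖ := hb.trans_lt hy
    have hnorm_x : ‖(r / ‖y‖) • y‖ = r := by
      rw [norm_smul_of_nonneg (by positivity), div_mul_cancel₀ _ hy0.ne']
    refine ⟨(r / ‖y‖) • y, show a < ‖(r / ‖y‖) • y‖ from hnorm_x.symm ▸ hr, ?_⟩
    rw [radialExtension, hnorm_x, hφr, smul_smul, div_mul_div_cancel₀ hr0.ne',
      div_self hy0.ne', one_smul]

end RadialExtension

theorem mapsTo_add_inv_Ioi_one : MapsTo (fun r : ℝ => r + r⁻¹) (Ioi 1) (Ioi 2) := by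
  intro r (hr : 1 < r)
  have hr0 : 0 < r := one_pos.trans hr
  have hdiff : r + r⁻¹ - 2 = (r - 1) ^ 2 / r := by field_simp; ring
  have hpos : 0 < (r - 1) ^ 2 / r := div_pos (pow_pos (sub_pos.mpr hr) 2) hr0
  exact sub_pos.mp (hdiff ▸ hpos)

theorem injOn_add_inv_Ioi_one : InjOn (fun r : ℝ => r + r⁻¹) (Ioi 1) := by
  intro r (hr : 1 < r) s (hs : 1 < s) h
  have hr0 : 0 < r := one_pos.trans hr
  have hs0 : 0 < s := one_pos.trans hs
  -- `r + r⁻¹ - (s + s⁻¹) = (r - s) (1 - (r s)⁻¹)`, and `r s > 1`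
  have hfactor : (r - s) * (r * s - 1) = 0 := by
    field_simp at h
    linear_combination h
  have hrs : r * s - 1 ≠ 0 := by nlinarith
  exact sub_eq_zero.mp ((mul_eq_zero.mp hfactor).resolve_right hrs)

theorem surjOn_add_inv_Ioi_one : SurjOn (fun r : ℝ => r + r⁻¹) (Ioi 1) (Ioi 2) := by
  intro s (hs : 2 < s)
  have hcont : ContinuousOn (fun r : ℝ => r + r⁻¹) (Icc 1 s) :=
    continuousOn_id.add (continuousOn_inv₀.mono fun r hr => (one_pos.trans_le hr.1).ne')
  have hmem : s ∈ Ioo (1 + 1⁻¹) (s + s⁻¹) :=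
    ⟨by norm_num; exact hs, lt_add_of_pos_right s (inv_pos.mpr (by linarith))⟩
  obtain ⟨r, hr, hrs⟩ := intermediate_value_Ioo (by linarith) hcont hmem
  exact ⟨r, hr.1, hrs⟩

theorem bijOn_add_inv_Ioi_one : BijOn (fun r : ℝ => r + r⁻¹) (Ioi 1) (Ioi 2) :=
  ⟨mapsTo_add_inv_Ioi_one, injOn_add_inv_Ioi_one, surjOn_add_inv_Ioi_one⟩

theorem Complex.add_one_div_conj_eq_radialExtension {z : ℂ} (hz : z ≠ 0) :
    z + 1 / (starRingEnd ℂ z) = radialExtension (fun r : ℝ => r + r⁻¹) z := by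
  have hn : (‖z‖ : ℂ) ≠ 0 := by exact_mod_cast norm_ne_zero_iff.mpr hz
  have hconj : starRingEnd ℂ z ≠ 0 := by simpa using hz
  have hsq : z * starRingEnd ℂ z = (‖z‖ : ℂ) ^ 2 := Complex.mul_conj' z
  rw [radialExtension, Complex.real_smul]
  push_cast
  field_simp
  linear_combination -hsq

theorem stmt1 :
    Set.BijOn (fun z : ℂ => z + 1 / (starRingEnd ℂ z))
      {z : ℂ | 1 < ‖z‖} {ξ : ℂ | 2 < ‖ξ‖} := by
  refine (bijOn_radialExtension zero_le_one zero_le_two bijOn_add_inv_Ioi_one).congr ?_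
  intro z (hz : 1 < ‖z‖)
  exact (Complex.add_one_div_conj_eq_radialExtension (norm_pos_iff.mp (one_pos.trans hz))).symm
end

section
/- For every α ≥ 0, every t ∈ ℝ and every u ∈ ℂ, ∫_{{ξ ∈ ℂ : |ξ| ≤ 2}} |ξ|^α e^{i t S̃(u,ξ)} dA(ξ) = (1/2) ∫₀^{2π} ∫₀^{2π} |e^{iφ₁} + e^{iφ₂}|^α e^{i t S(u, e^{iφ₁}, e^{iφ₂})} |sin(φ₁ − φ₂)| dφ₁ dφ₂. -/
open MeasureTheory

/-- The phase of the linearized Novikov–Veselov equation at energy `E = 1`. -/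
noncomputable def Stilde (u ξ : ℂ) : ℝ :=
  ((ξ ^ 3 + (starRingEnd ℂ ξ) ^ 3) * (1 - 3 / ((‖ξ‖ : ℂ) ^ 2))
    + (1 / 2) * ((starRingEnd ℂ u) * ξ + u * (starRingEnd ℂ ξ))).re

/-- The phase after the change of variables `ξ = λ + λ'` on the unit circle. -/
noncomputable def Sph (u l l' : ℂ) : ℝ :=
  (l ^ 3 + (starRingEnd ℂ l) ^ 3 + l' ^ 3 + (starRingEnd ℂ l') ^ 3
    + (1 / 2) * ((l + l') * (starRingEnd ℂ u) + ((starRingEnd ℂ l) + (starRingEnd ℂ l')) * u)).re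

/-!
Parametrize the disc of radius 2 by `(φ₁, φ₂) ↦ e^{iφ₁} + e^{iφ₂}`. On the triangle
`0 < φ₁ < φ₂ ≤ 2π`, minus the line `φ₂ - φ₁ = π` that it collapses to `0`, this map is injective:
two unit vectors `λ, λ'` with `λ + λ' = ξ ≠ 0` also satisfy `λλ' = ξ / conj ξ` (conjugate and use
`conj λ = λ⁻¹`), so they are the two roots of one quadratic. Its image is the punctured open disc
and its Jacobian is `sin (φ₂ - φ₁)`. On the unit circle `|ξ|² = (λ + λ')² / (λλ')`, which turns
`S̃(u, λ + λ')` into `S(u, λ, λ')`. Finally the integrand on the square `(0, 2π]²` is symmetric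
in `(φ₁, φ₂)`, so the triangle carries half of its integral.
-/

open Complex Set
open scoped Real

lemma abs_sin_sub_comm (a b : ℝ) : |Real.sin (a - b)| = |Real.sin (b - a)| := by
  rw [← neg_sub, Real.sin_neg, abs_neg]

lemma volume_diagonal_eq_zero : volume {p : ℝ × ℝ | p.1 = p.2} = 0 := by
  rw [Measure.volume_eq_prod,
    Measure.prod_apply (measurableSet_eq_fun measurable_fst measurable_snd)]
  simp [preimage]

theorem setIntegral_prod_self_eq_two_smul {E : Type*} [NormedAddCommGroup E] [NormedSpace ℝ E]
    {s : Set ℝ} (hs : MeasurableSet s) {f : ℝ × ℝ → E} (hf : IntegrableOn f (s ×ˢ s))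
    (hsymm : ∀ p, f p.swap = f p) :
    ∫ p in s ×ˢ s, f p = (2 : ℝ) • ∫ p in s ×ˢ s ∩ {p | p.1 < p.2}, f p := by
  set T := s ×ˢ s ∩ {p : ℝ × ℝ | p.1 < p.2}
  set T' := s ×ˢ s ∩ {p : ℝ × ℝ | p.2 < p.1}
  have hsplit : T ∪ T' = s ×ˢ s \ {p | p.1 = p.2} := by
    ext p
    simp only [T, T', mem_union, mem_inter_iff, mem_sdiff, mem_ofPred_eq, ← and_or_left,
      lt_or_lt_iff_ne, ne_eq]
  have hdisj : Disjoint T T' := disjoint_left.mpr fun p h (h' : _ ∧ p.2 < p.1) => h'.2.not_gt h.2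
  have hswap : Prod.swap ⁻¹' T' = T := by
    ext p
    simp only [T, T', mem_preimage, mem_inter_iff, mem_prod, Prod.fst_swap, Prod.snd_swap,
      mem_ofPred_eq, and_comm]
  rw [← setIntegral_congr_set (sdiff_null_ae_eq_self volume_diagonal_eq_zero), ← hsplit,
    setIntegral_union hdisj ((hs.prod hs).inter (measurableSet_lt measurable_snd measurable_fst))
      (hf.mono_set inter_subset_left) (hf.mono_set inter_subset_left),
    Measure.volume_eq_prod, ← (Measure.measurePreserving_swap).setIntegral_preimage_emb
      MeasurableEquiv.prodComm.measurableEmbedding _ T', hswap, two_smul]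
  simp only [hsymm]

lemma det_reCLM_smulRight_add_imCLM_smulRight (v w : ℂ) :
    (reCLM.smulRight v + imCLM.smulRight w : ℂ →L[ℝ] ℂ).det = v.re * w.im - v.im * w.re := by
  rw [ContinuousLinearMap.det, ← LinearMap.det_toMatrix basisOneI, Matrix.det_fin_two]
  simp [LinearMap.toMatrix_apply, mul_comm]

lemma eq_and_eq_or_eq_and_eq_of_add_eq_add {l m l' m' : ℂ} (hl : ‖l‖ = 1) (hm : ‖m‖ = 1)
    (hl' : ‖l'‖ = 1) (hm' : ‖m'‖ = 1) (h : l + m = l' + m') (h0 : l + m ≠ 0) :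
    (l' = l ∧ m' = m) ∨ (l' = m ∧ m' = l) := by
  have hne : ∀ {z : ℂ}, ‖z‖ = 1 → z ≠ 0 := fun hz => norm_ne_zero_iff.mp (by simp [hz])
  have hinv := congrArg (starRingEnd ℂ) h
  simp only [map_add, ← inv_eq_conj hl, ← inv_eq_conj hm, ← inv_eq_conj hl',
    ← inv_eq_conj hm'] at hinv
  field_simp [hne hl, hne hm, hne hl', hne hm'] at hinv
  have hprod : l * m = l' * m' := by
    refine mul_left_cancel₀ h0 ?_
    linear_combination (l * m) * h - hinv
  have hroot : (l' - l) * (l' - m) = 0 := by linear_combination (-l') * h + hprod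
  rcases mul_eq_zero.mp hroot with h1 | h1
  · exact Or.inl ⟨by linear_combination h1, by linear_combination -h - h1⟩
  · exact Or.inr ⟨by linear_combination h1, by linear_combination -h - h1⟩

noncomputable def expI (x : ℝ) : ℂ := Complex.exp (I * x)

lemma expI_eq_circleExp (x : ℝ) : expI x = Circle.exp x := by
  rw [expI, Circle.coe_exp, mul_comm]

lemma norm_expI (x : ℝ) : ‖expI x‖ = 1 := by
  rw [expI_eq_circleExp]; exact Circle.norm_coe _

lemma periodic_expI : Function.Periodic expI (2 * π) := fun x => by
  simp only [expI_eq_circleExp, Circle.exp_add_two_pi]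

lemma injOn_expI : InjOn expI (Ioc 0 (2 * π)) := fun x hx y hy h =>
  Circle.exp_injOn_Ioc (by linarith) hx hy
    (Circle.coe_injective (by rwa [← expI_eq_circleExp, ← expI_eq_circleExp]))

lemma hasDerivAt_expI (x : ℝ) : HasDerivAt expI (I * expI x) x := by
  unfold expI
  simpa [mul_comm] using ((hasDerivAt_id (x : ℂ)).const_mul I).cexp.comp_ofReal

lemma expI_add_expI (a b : ℝ) :
    expI a + expI b = 2 * Real.cos ((b - a) / 2) * expI ((a + b) / 2) := by
  have ha : expI a = Complex.exp (-((b - a) / 2 : ℝ) * I) * expI ((a + b) / 2) := by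
    rw [expI, expI, ← Complex.exp_add]; congr 1; push_cast; ring
  have hb : expI b = Complex.exp (((b - a) / 2 : ℝ) * I) * expI ((a + b) / 2) := by
    rw [expI, expI, ← Complex.exp_add]; congr 1; push_cast; ring
  rw [ha, hb, ofReal_cos, Complex.cos]
  ring

lemma norm_expI_add_expI (a b : ℝ) :
    ‖expI a + expI b‖ = 2 * |Real.cos ((b - a) / 2)| := by
  rw [expI_add_expI, norm_mul, norm_mul, norm_expI, norm_real, Real.norm_eq_abs]
  norm_num

lemma expI_add_expI_ne_zero {a b : ℝ} (h0 : 0 < b - a) (h2π : b - a < 2 * π) (hπ : b - a ≠ π) :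
    expI a + expI b ≠ 0 := by
  rw [← norm_ne_zero_iff, norm_expI_add_expI]
  have hcos : Real.cos ((b - a) / 2) ≠ 0 := by
    rcases lt_or_gt_of_ne (show (b - a) / 2 ≠ π / 2 by contrapose! hπ; linarith) with h | h
    · exact (Real.cos_pos_of_mem_Ioo ⟨by linarith, h⟩).ne'
    · exact (Real.cos_neg_of_pi_div_two_lt_of_lt h (by linarith)).ne
  positivity

lemma norm_expI_add_expI_lt_two {a b : ℝ} (h0 : 0 < b - a) (h2π : b - a < 2 * π) :
    ‖expI a + expI b‖ < 2 := by
  have hsin : 0 < Real.sin ((b - a) / 2) := Real.sin_pos_of_pos_of_lt_pi (by linarith) (by linarith)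
  have := Real.sin_sq_add_cos_sq ((b - a) / 2)
  have : |Real.cos ((b - a) / 2)| < 1 := abs_lt.mpr ⟨by nlinarith, by nlinarith⟩
  rw [norm_expI_add_expI]
  linarith

lemma sin_sub_eq_zero_of_expI_add_expI_eq_zero {a b : ℝ} (h : expI a + expI b = 0) :
    Real.sin (a - b) = 0 := by
  have hcos : Real.cos ((b - a) / 2) = 0 := by
    simpa [norm_expI_add_expI] using congrArg norm h
  rw [show a - b = -(2 * ((b - a) / 2)) by ring, Real.sin_neg, Real.sin_two_mul, hcos]
  ring

lemma exists_expI_add_expI_eq {ξ : ℂ} (hξ : ‖ξ‖ ≤ 2) : ∃ a b : ℝ, expI a + expI b = ξ := by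
  set β := Real.arccos (‖ξ‖ / 2)
  refine ⟨arg ξ - β, arg ξ + β, ?_⟩
  have hcos : Real.cos β = ‖ξ‖ / 2 :=
    Real.cos_arccos (by linarith [norm_nonneg ξ]) (by linarith)
  rw [expI_add_expI, show (arg ξ + β - (arg ξ - β)) / 2 = β by ring,
    show (arg ξ - β + (arg ξ + β)) / 2 = arg ξ by ring, hcos, expI, mul_comm I]
  push_cast
  linear_combination norm_mul_exp_arg_mul_I ξ

lemma Stilde_add_eq_Sph (u : ℂ) {l m : ℂ} (hl : ‖l‖ = 1) (hm : ‖m‖ = 1) (h0 : l + m ≠ 0) :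
    Stilde u (l + m) = Sph u l m := by
  have hl0 : l ≠ 0 := norm_ne_zero_iff.mp (by simp [hl])
  have hm0 : m ≠ 0 := norm_ne_zero_iff.mp (by simp [hm])
  have hnorm : ((‖l + m‖ : ℂ)) ^ 2 = (l + m) ^ 2 / (l * m) := by
    rw [← ofReal_pow, Complex.sq_norm, ← mul_conj, map_add, ← inv_eq_conj hl, ← inv_eq_conj hm]
    field_simp
    ring
  unfold Stilde Sph
  congr 1
  rw [map_add, ← inv_eq_conj hl, ← inv_eq_conj hm, hnorm]
  field_simp
  ring

lemma Stilde_expI_add_expI (u : ℂ) {a b : ℝ} (h : Real.sin (a - b) ≠ 0) :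
    Stilde u (expI a + expI b) = Sph u (expI a) (expI b) :=
  Stilde_add_eq_Sph u (norm_expI a) (norm_expI b)
    fun h0 => h (sin_sub_eq_zero_of_expI_add_expI_eq_zero h0)

noncomputable def expIPair (z : ℂ) : ℂ := expI z.re + expI z.im

lemma hasFDerivAt_expIPair (z : ℂ) :
    HasFDerivAt expIPair
      (reCLM.smulRight (I * expI z.re) + imCLM.smulRight (I * expI z.im)) z := by
  have hre := (hasDerivAt_expI z.re).hasFDerivAt.comp z reCLM.hasFDerivAt
  have him := (hasDerivAt_expI z.im).hasFDerivAt.comp z imCLM.hasFDerivAt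
  refine (hre.add him).congr_fderiv ?_
  ext1; simp

lemma det_expIPair_fderiv (z : ℂ) :
    (reCLM.smulRight (I * expI z.re) + imCLM.smulRight (I * expI z.im) : ℂ →L[ℝ] ℂ).det
      = Real.sin (z.im - z.re) := by
  rw [det_reCLM_smulRight_add_imCLM_smulRight]
  simp only [expI, mul_comm I, mul_re, mul_im, I_re, I_im, exp_ofReal_mul_I_re,
    exp_ofReal_mul_I_im, Real.sin_sub]
  ring

def angleTriangle : Set (ℝ × ℝ) := Ioc 0 (2 * π) ×ˢ Ioc 0 (2 * π) ∩ {p | p.1 < p.2}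

def angleRegion : Set ℂ := measurableEquivRealProd ⁻¹' angleTriangle \ {z | z.im - z.re = π}

lemma measurableSet_angleTriangle : MeasurableSet angleTriangle :=
  (measurableSet_Ioc.prod measurableSet_Ioc).inter (measurableSet_lt measurable_fst measurable_snd)

lemma measurableSet_angleRegion : MeasurableSet angleRegion :=
  (measurableSet_angleTriangle.preimage measurableEquivRealProd.measurable).diff
    (measurableSet_eq_fun (measurable_im.sub measurable_re) measurable_const)

lemma injOn_expIPair_angleRegion : InjOn expIPair angleRegion := by
  rintro z ⟨⟨⟨(hz₁ : z.re ∈ Ioc 0 (2 * π)), (hz₂ : z.im ∈ Ioc 0 (2 * π))⟩, (hz : z.re < z.im)⟩, hzπ⟩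
    w ⟨⟨⟨(hw₁ : w.re ∈ Ioc 0 (2 * π)), (hw₂ : w.im ∈ Ioc 0 (2 * π))⟩, (hw : w.re < w.im)⟩, -⟩ h
  have h0 : expI z.re + expI z.im ≠ 0 :=
    expI_add_expI_ne_zero (by linarith) (by linarith [hz₁.1, hz₂.2]) hzπ
  rcases eq_and_eq_or_eq_and_eq_of_add_eq_add (norm_expI _) (norm_expI _) (norm_expI _)
    (norm_expI _) h h0 with ⟨hre, him⟩ | ⟨hre, him⟩
  · exact Complex.ext (injOn_expI hz₁ hw₁ hre.symm) (injOn_expI hz₂ hw₂ him.symm)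
  · linarith [injOn_expI hz₂ hw₁ hre.symm, injOn_expI hz₁ hw₂ him.symm]

lemma image_expIPair_angleRegion : expIPair '' angleRegion = Metric.ball 0 2 \ {0} := by
  ext ξ
  constructor
  · rintro ⟨z, ⟨⟨⟨(hz₁ : z.re ∈ Ioc 0 (2 * π)), (hz₂ : z.im ∈ Ioc 0 (2 * π))⟩,
      (hz : z.re < z.im)⟩, hzπ⟩, rfl⟩
    have h2π : z.im - z.re < 2 * π := by linarith [hz₁.1, hz₂.2]
    exact ⟨mem_ball_zero_iff.mpr (norm_expI_add_expI_lt_two (by linarith) h2π),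
      expI_add_expI_ne_zero (by linarith) h2π hzπ⟩
  · rintro ⟨hξ2, hξ0 : ξ ≠ 0⟩
    rw [mem_ball_zero_iff] at hξ2
    obtain ⟨a, b, hab⟩ := exists_expI_add_expI_eq hξ2.le
    obtain ⟨a', ha', ha⟩ := periodic_expI.exists_mem_Ioc Real.two_pi_pos a 0
    obtain ⟨b', hb', hb⟩ := periodic_expI.exists_mem_Ioc Real.two_pi_pos b 0
    rw [zero_add] at ha' hb'
    rw [ha, hb] at hab
    clear ha hb a b
    wlog hle : a' ≤ b' generalizing a' b'
    · exact this b' hb' a' (by rwa [add_comm]) ha' (le_of_not_ge hle)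
    have hne : a' ≠ b' := by
      rintro rfl
      rw [← hab, norm_expI_add_expI] at hξ2
      simp at hξ2
    have hπ : b' - a' ≠ π := by
      intro h
      apply hξ0
      rw [← norm_eq_zero, ← hab, norm_expI_add_expI, h, Real.cos_pi_div_two]
      simp
    exact ⟨⟨a', b'⟩, ⟨⟨⟨ha', hb'⟩, lt_of_le_of_ne hle hne⟩, hπ⟩, hab⟩

lemma image_expIPair_angleRegion_ae_eq :
    expIPair '' angleRegion =ᵐ[volume] Metric.closedBall (0 : ℂ) 2 := by
  rw [image_expIPair_angleRegion, ← Metric.closedBall_sdiff_sphere]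
  exact (sdiff_null_ae_eq_self (measure_singleton _)).trans
    (sdiff_null_ae_eq_self (Measure.addHaar_sphere _ _ _))

theorem setIntegral_closedBall_two_eq {E : Type*} [NormedAddCommGroup E] [NormedSpace ℝ E]
    (g : ℂ → E) :
    ∫ ξ in Metric.closedBall (0 : ℂ) 2, g ξ
      = ∫ p in angleTriangle, |Real.sin (p.1 - p.2)| • g (expI p.1 + expI p.2) := by
  rw [← setIntegral_congr_set image_expIPair_angleRegion_ae_eq,
    integral_image_eq_integral_abs_det_fderiv_smul volume measurableSet_angleRegion
      (fun z _ => (hasFDerivAt_expIPair z).hasFDerivWithinAt) injOn_expIPair_angleRegion,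
    ← volume_preserving_equiv_real_prod.setIntegral_preimage_emb
      measurableEquivRealProd.measurableEmbedding,
    setIntegral_eq_of_subset_of_forall_sdiff_eq_zero
      (measurableSet_angleTriangle.preimage measurableEquivRealProd.measurable) sdiff_subset]
  · refine setIntegral_congr_fun measurableSet_angleRegion fun z _ => ?_
    simp only [det_expIPair_fderiv, measurableEquivRealProd_apply, abs_sin_sub_comm z.re]
    rfl
  · rintro z ⟨hzT, hz⟩
    have hπ : z.re - z.im = -π := by
      by_contra h
      exact hz ⟨hzT, fun h' : z.im - z.re = π => h (by linarith)⟩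
    simp [hπ]

theorem setIntegral_closedBall_two_eq_half_integral_integral {E : Type*} [NormedAddCommGroup E]
    [NormedSpace ℝ E] (g : ℂ → E)
    (hg : IntegrableOn (fun p : ℝ × ℝ => |Real.sin (p.1 - p.2)| • g (expI p.1 + expI p.2))
      (Ioc 0 (2 * π) ×ˢ Ioc 0 (2 * π))) :
    ∫ ξ in Metric.closedBall (0 : ℂ) 2, g ξ = (1 / 2 : ℝ) • ∫ a in (0 : ℝ)..(2 * π),
      ∫ b in (0 : ℝ)..(2 * π), |Real.sin (a - b)| • g (expI a + expI b) := by
  have hsymm (p : ℝ × ℝ) : |Real.sin (p.swap.1 - p.swap.2)| • g (expI p.swap.1 + expI p.swap.2)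
      = |Real.sin (p.1 - p.2)| • g (expI p.1 + expI p.2) := by
    rw [Prod.fst_swap, Prod.snd_swap, abs_sin_sub_comm, add_comm]
  simp only [intervalIntegral.integral_of_le Real.two_pi_pos.le]
  rw [← setIntegral_prod _ hg, ← Measure.volume_eq_prod,
    setIntegral_prod_self_eq_two_smul measurableSet_Ioc hg hsymm, setIntegral_closedBall_two_eq,
    smul_smul]
  norm_num [angleTriangle]

theorem stmt2 (α : ℝ) (hα : 0 ≤ α) (t : ℝ) (u : ℂ) :
    (∫ ξ in {ξ : ℂ | ‖ξ‖ ≤ 2},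
        ((‖ξ‖ ^ α : ℝ) : ℂ) *
          Complex.exp (Complex.I * (t : ℂ) * ((Stilde u ξ : ℝ) : ℂ)))
      = (1 / 2 : ℂ) *
        ∫ φ₁ in (0 : ℝ)..(2 * Real.pi), ∫ φ₂ in (0 : ℝ)..(2 * Real.pi),
          ((‖Complex.exp (Complex.I * (φ₁ : ℂ)) + Complex.exp (Complex.I * (φ₂ : ℂ))‖ ^ α : ℝ) : ℂ)
            * Complex.exp (Complex.I * (t : ℂ) *
                ((Sph u (Complex.exp (Complex.I * (φ₁ : ℂ))) (Complex.exp (Complex.I * (φ₂ : ℂ))) : ℝ) : ℂ))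
            * ((|Real.sin (φ₁ - φ₂)| : ℝ) : ℂ) := by
  have hG (a b : ℝ) : |Real.sin (a - b)| • (((‖expI a + expI b‖ ^ α : ℝ) : ℂ) *
        Complex.exp (I * t * (Stilde u (expI a + expI b) : ℂ)))
      = ((‖expI a + expI b‖ ^ α : ℝ) : ℂ) * Complex.exp (I * t * (Sph u (expI a) (expI b) : ℂ))
        * ((|Real.sin (a - b)| : ℝ) : ℂ) := by
    rcases eq_or_ne (Real.sin (a - b)) 0 with h | h
    · simp [h]
    · rw [Stilde_expI_add_expI u h, real_smul, mul_comm]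
  have hcont : Continuous fun p : ℝ × ℝ => ((‖expI p.1 + expI p.2‖ ^ α : ℝ) : ℂ)
      * Complex.exp (I * t * (Sph u (expI p.1) (expI p.2) : ℂ))
      * ((|Real.sin (p.1 - p.2)| : ℝ) : ℂ) := by
    unfold Sph expI
    fun_prop (disch := exact fun _ => Or.inr hα)
  have hball : {ξ : ℂ | ‖ξ‖ ≤ 2} = Metric.closedBall 0 2 := by ext; simp
  rw [hball, setIntegral_closedBall_two_eq_half_integral_integral _ ?_]
  · simp only [hG, real_smul]
    norm_num [expI]
  · simp only [hG]
    exact (hcont.continuousOn.integrableOn_compact (isCompact_Icc.prod isCompact_Icc)).mono_set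
      (prod_mono Ioc_subset_Icc_self Ioc_subset_Icc_self)
end

section
/- Let K = √(√2 + 1). For every ω ∈ (0, K − 1] and every φ ∈ ℝ, defining λ₀ = (1+ω) e^{iφ/2}, λ₁ = e^{−iφ}, λ₂ = (1+ω)^{−1} e^{iφ/2}, λ₃ = −λ₀, λ₄ = −λ₁, λ₅ = −λ₂, and ω₁ := min{ |λ_i − λ_j| : 0 ≤ i < j ≤ 5, (i,j) ≠ (2,5) }, one has | |λ_j| − 1 | ≤ K ω₁ for every j ∈ {0, 1, 2, 3, 4, 5}; that is, the distance of every point λ_j to the unit circle is at most K ω₁. -/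
/-!
All six points lie on the circles of radii `r = 1 + ω`, `1` and `r⁻¹`. The two points of every
admissible pair either lie on different circles, hence are at least `1 - r⁻¹` apart, or are
antipodal on a circle of radius `≥ 1`, hence at least `2` apart. So `1 - r⁻¹ ≤ ω₁`, while every
point is within `r - 1 = r (1 - r⁻¹) ≤ K (1 - r⁻¹)` of the unit circle.
-/

section Levels

variable {r a b : ℝ}

lemma one_sub_inv_le_sub_one (hr : 1 ≤ r) : 1 - r⁻¹ ≤ r - 1 := by
  have hmul : r * r⁻¹ = 1 := mul_inv_cancel₀ (by linarith)
  nlinarith [mul_nonneg (sub_nonneg.2 hr) (sub_nonneg.2 (inv_le_one_of_one_le₀ hr))]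

lemma abs_sub_one_le_of_mem_levels (hr : 1 ≤ r) (ha : a ∈ ({r, 1, r⁻¹} : Set ℝ)) :
    |a - 1| ≤ r - 1 := by
  rcases ha with rfl | rfl | rfl
  · rw [abs_of_nonneg (by linarith)]
  · simp [hr]
  · rw [abs_sub_comm, abs_of_nonneg (by linarith [inv_le_one_of_one_le₀ hr])]
    exact one_sub_inv_le_sub_one hr

lemma one_sub_inv_le_abs_sub_of_mem_levels (hr : 1 ≤ r) (ha : a ∈ ({r, 1, r⁻¹} : Set ℝ))
    (hb : b ∈ ({r, 1, r⁻¹} : Set ℝ)) (hab : a ≠ b) : 1 - r⁻¹ ≤ |a - b| := by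
  have hpos : 0 < r⁻¹ := by positivity
  have hgap := one_sub_inv_le_sub_one hr
  rcases ha with rfl | rfl | rfl <;> rcases hb with rfl | rfl | rfl <;>
    first
    | exact absurd rfl hab
    | exact le_abs.2 (Or.inl (by linarith))
    | exact le_abs.2 (Or.inr (by linarith))

end Levels

lemma norm_mem_levels {lam : Fin 6 → ℂ} {r : ℝ}
    (m0 : ‖lam 0‖ = r) (m1 : ‖lam 1‖ = 1) (m2 : ‖lam 2‖ = r⁻¹)
    (h3 : lam 3 = -lam 0) (h4 : lam 4 = -lam 1) (h5 : lam 5 = -lam 2) (k : Fin 6) :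
    ‖lam k‖ ∈ ({r, 1, r⁻¹} : Set ℝ) := by
  fin_cases k <;> simp [m0, m1, m2, h3, h4, h5]

lemma one_sub_inv_le_norm_sub {lam : Fin 6 → ℂ} {r : ℝ} (hr : 1 < r)
    (m0 : ‖lam 0‖ = r) (m1 : ‖lam 1‖ = 1) (m2 : ‖lam 2‖ = r⁻¹)
    (h3 : lam 3 = -lam 0) (h4 : lam 4 = -lam 1) (h5 : lam 5 = -lam 2)
    {i j : Fin 6} (hij : i < j) (hne : (i, j) ≠ (2, 5)) :
    1 - r⁻¹ ≤ ‖lam i - lam j‖ := by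
  have levels := norm_mem_levels m0 m1 m2 h3 h4 h5
  have hinv : r⁻¹ < 1 := inv_lt_one_of_one_lt₀ hr
  have of_norm_ne (h : ‖lam i‖ ≠ ‖lam j‖) : 1 - r⁻¹ ≤ ‖lam i - lam j‖ :=
    (one_sub_inv_le_abs_sub_of_mem_levels hr.le (levels i) (levels j) h).trans
      (abs_norm_sub_norm_le _ _)
  have antipodal (z : ℂ) (hz : 1 ≤ ‖z‖) : 1 - r⁻¹ ≤ ‖z - -z‖ := by
    rw [sub_neg_eq_add, ← two_mul, norm_mul, Complex.norm_two]
    linarith [inv_pos.2 (zero_lt_one.trans hr)]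
  fin_cases i <;> fin_cases j <;>
    simp only [Fin.zero_eta, Fin.mk_one, Fin.reduceFinMk] at hij hne of_norm_ne ⊢
  all_goals first
    | exact absurd hij (by decide)
    | exact absurd rfl hne
    | (rw [h3]; exact antipodal _ (by rw [m0]; exact hr.le))
    | (rw [h4]; exact antipodal _ m1.ge)
    | exact of_norm_ne (by simp only [h3, h4, h5, norm_neg, m0, m1, m2]; intro h; linarith)

theorem stmt7 (ω φ : ℝ) (hω : 0 < ω)
    (hωK : ω ≤ Real.sqrt (Real.sqrt 2 + 1) - 1)
    (lam : Fin 6 → ℂ)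
    (h0 : lam 0 = ((1 + ω : ℝ) : ℂ) * Complex.exp (Complex.I * (φ : ℂ) / 2))
    (h1 : lam 1 = Complex.exp (-(Complex.I * (φ : ℂ))))
    (h2 : lam 2 = ((1 + ω : ℝ) : ℂ)⁻¹ * Complex.exp (Complex.I * (φ : ℂ) / 2))
    (h3 : lam 3 = -lam 0) (h4 : lam 4 = -lam 1) (h5 : lam 5 = -lam 2)
    (ω₁ : ℝ)
    (hω₁ : IsLeast {d : ℝ | ∃ i j : Fin 6, i < j ∧ (i, j) ≠ ((2 : Fin 6), (5 : Fin 6)) ∧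
      d = ‖lam i - lam j‖} ω₁) :
    ∀ j : Fin 6, |‖lam j‖ - 1| ≤ Real.sqrt (Real.sqrt 2 + 1) * ω₁ := by
  have hr : 1 < 1 + ω := by linarith
  have hexp : ‖Complex.exp (Complex.I * φ / 2)‖ = 1 := by simp [Complex.norm_exp]
  have m0 : ‖lam 0‖ = 1 + ω := by
    rw [h0, norm_mul, hexp, Complex.norm_of_nonneg (by linarith), mul_one]
  have m1 : ‖lam 1‖ = 1 := by simp [h1, Complex.norm_exp]
  have m2 : ‖lam 2‖ = (1 + ω)⁻¹ := by
    rw [h2, norm_mul, hexp, norm_inv, Complex.norm_of_nonneg (by linarith), mul_one]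
  obtain ⟨i, j, hij, hne, hω₁_eq⟩ := hω₁.1
  have hgap : 1 - (1 + ω)⁻¹ ≤ ω₁ :=
    hω₁_eq ▸ one_sub_inv_le_norm_sub hr m0 m1 m2 h3 h4 h5 hij hne
  intro k
  calc |‖lam k‖ - 1|
      ≤ (1 + ω) - 1 := abs_sub_one_le_of_mem_levels hr.le (norm_mem_levels m0 m1 m2 h3 h4 h5 k)
    _ = (1 + ω) * (1 - (1 + ω)⁻¹) := by field_simp
    _ ≤ Real.sqrt (Real.sqrt 2 + 1) * ω₁ :=
      mul_le_mul (by linarith) hgap (by linarith [inv_lt_one_of_one_lt₀ hr]) (by positivity)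
end

section
/- Let φ ∈ ℝ, δ ∈ [0, 2], and λ₀, λ₁, λ₂ ∈ ℂ satisfy λ₀ λ₁ λ₂ = 1, |λ₀ − e^{iφ}| ≤ δ, |λ₁ − λ₀| ≤ δ, and |λ₂ − λ₀| ≤ δ. Then |e^{3iφ} − 1| ≤ 37 δ. -/
/-!
Put `e = exp (i φ)`. Since `λ₀ λ₁ λ₂ = 1`, the quantity `e³ - 1 = e³ - λ₀ λ₁ λ₂` telescopes into
`(e - λ₀) e² + λ₀ (e - λ₁) e + λ₀ λ₁ (e - λ₂)`. Each `λⱼ` is within `2δ` of the unit vector `e`,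
so (using `δ ≤ 2`) `|λ₀| ≤ 3`, `|λ₁| ≤ 5`, and the three terms are at most `δ`, `6δ` and `30δ`.
-/

theorem norm_pow_three_sub_mul_mul_le {R : Type*} [SeminormedRing R] {x : R} (hx : ‖x‖ ≤ 1)
    (a b c : R) :
    ‖x ^ 3 - a * b * c‖ ≤ ‖x - a‖ + ‖a‖ * ‖x - b‖ + ‖a‖ * ‖b‖ * ‖x - c‖ := by
  have hx2 : ‖x ^ 2‖ ≤ 1 := (norm_pow_le' x two_pos).trans (pow_le_one₀ (norm_nonneg x) hx)
  calc ‖x ^ 3 - a * b * c‖ = ‖(x - a) * x ^ 2 + a * (x - b) * x + a * b * (x - c)‖ := by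
        congr 1; noncomm_ring
    _ ≤ ‖(x - a) * x ^ 2‖ + ‖a * (x - b) * x‖ + ‖a * b * (x - c)‖ := norm_add₃_le
    _ ≤ ‖x - a‖ * 1 + ‖a‖ * ‖x - b‖ * 1 + ‖a‖ * ‖b‖ * ‖x - c‖ := by
        gcongr
        · exact norm_mul_le_of_le le_rfl hx2
        · exact norm_mul_le_of_le (norm_mul_le _ _) hx
        · exact norm_mul₃_le
    _ = ‖x - a‖ + ‖a‖ * ‖x - b‖ + ‖a‖ * ‖b‖ * ‖x - c‖ := by ring

theorem stmt8_general (φ δ : ℝ) (hδ2 : δ ≤ 2) (lam₀ lam₁ lam₂ : ℂ)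
    (hprod : lam₀ * lam₁ * lam₂ = 1)
    (h0 : ‖lam₀ - Complex.exp (Complex.I * (φ : ℂ))‖ ≤ δ)
    (h1 : ‖lam₁ - lam₀‖ ≤ δ)
    (h2 : ‖lam₂ - lam₀‖ ≤ δ) :
    ‖Complex.exp (3 * Complex.I * (φ : ℂ)) - 1‖ ≤ 37 * δ := by
  set e := Complex.exp (Complex.I * (φ : ℂ))
  have he : ‖e‖ = 1 := by simp [e, Complex.norm_exp]
  have he3 : Complex.exp (3 * Complex.I * (φ : ℂ)) = e ^ 3 := by
    rw [← Complex.exp_nat_mul]; ring_nf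
  have hd₀ : ‖e - lam₀‖ ≤ δ := by rwa [norm_sub_rev]
  have hd₁ : ‖e - lam₁‖ ≤ 2 * δ := by
    linarith [norm_sub_le_norm_sub_add_norm_sub e lam₀ lam₁, norm_sub_rev lam₀ lam₁]
  have hd₂ : ‖e - lam₂‖ ≤ 2 * δ := by
    linarith [norm_sub_le_norm_sub_add_norm_sub e lam₀ lam₂, norm_sub_rev lam₀ lam₂]
  have hn₀ : ‖lam₀‖ ≤ 3 := by linarith [norm_le_norm_add_norm_sub' lam₀ e, norm_sub_rev lam₀ e]
  have hn₁ : ‖lam₁‖ ≤ 5 := by linarith [norm_le_norm_add_norm_sub' lam₁ e, norm_sub_rev lam₁ e]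
  rw [he3, ← hprod]
  refine (norm_pow_three_sub_mul_mul_le he.le lam₀ lam₁ lam₂).trans ?_
  have t₁ : ‖lam₀‖ * ‖e - lam₁‖ ≤ 3 * (2 * δ) := by gcongr
  have t₂ : ‖lam₀‖ * ‖lam₁‖ * ‖e - lam₂‖ ≤ 3 * 5 * (2 * δ) := by gcongr
  linarith

theorem stmt8 (φ δ : ℝ) (hδ0 : 0 ≤ δ) (hδ2 : δ ≤ 2) (lam₀ lam₁ lam₂ : ℂ)
    (hprod : lam₀ * lam₁ * lam₂ = 1)
    (h0 : ‖lam₀ - Complex.exp (Complex.I * (φ : ℂ))‖ ≤ δ)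
    (h1 : ‖lam₁ - lam₀‖ ≤ δ)
    (h2 : ‖lam₂ - lam₀‖ ≤ δ) :
    ‖Complex.exp (3 * Complex.I * (φ : ℂ)) - 1‖ ≤ 37 * δ :=
  stmt8_general φ δ hδ2 lam₀ lam₁ lam₂ hprod h0 h1 h2
end

section
/- Let c₀ = 4 · 3^{−3/4}. For every real c with |c| < c₀ one has 1 + c(x³ + y³) + (x² + y²)² > 0 for all (x, y) ∈ ℝ². -/
theorem stmt9 (c : ℝ) (hc : |c| < 4 * (3 : ℝ) ^ (-(3 : ℝ) / 4)) :
    ∀ x y : ℝ, 0 < 1 + c * (x ^ 3 + y ^ 3) + (x ^ 2 + y ^ 2) ^ 2 := by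
  set d : ℝ := (3 : ℝ) ^ ((3 : ℝ) / 4) with hd_def
  have hd : (0 : ℝ) < d := Real.rpow_pos_of_pos (by norm_num) _
  have hd4 : d ^ 4 = 27 := by
    rw [hd_def, ← Real.rpow_natCast ((3:ℝ) ^ ((3:ℝ)/4)) 4, ← Real.rpow_mul (by norm_num)]
    norm_num
  have hc' : |c| * d < 4 := by
    have h4d : (4 : ℝ) * (3 : ℝ) ^ (-(3 : ℝ) / 4) = 4 / d := by
      rw [neg_div, Real.rpow_neg (by norm_num), hd_def]
      ring
    rw [h4d] at hc
    calc |c| * d < (4 / d) * d := mul_lt_mul_of_pos_right hc hd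
      _ = 4 := by field_simp
  have key : ∀ t : ℝ, 0 ≤ t → 4 * t ^ 3 ≤ d * (1 + t ^ 4) := by
    intro t ht
    have h2 : 0 ≤ d * (1 + t ^ 4) := by positivity
    have hpow : (4 * t ^ 3) ^ 4 ≤ (d * (1 + t ^ 4)) ^ 4 := by
      have hh : (d * (1 + t ^ 4)) ^ 4 = 27 * (1 + t ^ 4) ^ 4 := by
        rw [mul_pow, hd4]
      rw [hh]
      nlinarith [mul_nonneg (sq_nonneg (t ^ 4 - 3))
        (by positivity : (0:ℝ) ≤ 27 * t ^ 8 + 14 * t ^ 4 + 3)]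
    exact le_of_pow_le_pow_left₀ (by norm_num) h2 hpow
  intro x y
  set t : ℝ := Real.sqrt (x ^ 2 + y ^ 2) with ht_def
  have ht : 0 ≤ t := Real.sqrt_nonneg _
  have ht2 : t ^ 2 = x ^ 2 + y ^ 2 := Real.sq_sqrt (by positivity)
  have hxle : |x| ≤ t := by
    rw [ht_def, ← Real.sqrt_sq_eq_abs]
    exact Real.sqrt_le_sqrt (by nlinarith [sq_nonneg y])
  have hyle : |y| ≤ t := by
    rw [ht_def, ← Real.sqrt_sq_eq_abs]
    exact Real.sqrt_le_sqrt (by nlinarith [sq_nonneg x])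
  have habs : |x ^ 3 + y ^ 3| ≤ t ^ 3 := by
    have h1 : |x ^ 3 + y ^ 3| ≤ |x ^ 3| + |y ^ 3| := abs_add_le _ _
    have h2 : |x ^ 3| = |x| ^ 3 := abs_pow x 3
    have h3 : |y ^ 3| = |y| ^ 3 := abs_pow y 3
    have h4 : |x| ^ 3 + |y| ^ 3 ≤ t * |x| ^ 2 + t * |y| ^ 2 := by
      nlinarith [sq_nonneg x, sq_nonneg y, abs_nonneg x, abs_nonneg y]
    have h5 : t * |x| ^ 2 + t * |y| ^ 2 = t ^ 3 := by
      rw [sq_abs, sq_abs]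
      nlinarith [ht2]
    linarith [h1, h2 ▸ h3 ▸ h1]
  have hcb : -(|c| * t ^ 3) ≤ c * (x ^ 3 + y ^ 3) := by
    have h1 := neg_abs_le (c * (x ^ 3 + y ^ 3))
    have h2 : |c * (x ^ 3 + y ^ 3)| = |c| * |x ^ 3 + y ^ 3| := abs_mul _ _
    nlinarith [abs_nonneg c]
  have hgoal : 0 < 1 + c * (x ^ 3 + y ^ 3) + (t ^ 2) ^ 2 := by
    rcases eq_or_lt_of_le ht with h0 | h0
    · have hx : x = 0 := by nlinarith [sq_nonneg x, sq_nonneg y]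
      have hy : y = 0 := by nlinarith [sq_nonneg x, sq_nonneg y]
      rw [hx, hy]; nlinarith [sq_nonneg (t ^ 2)]
    · have hkey := key t ht
      have hstrict : |c| * d * t ^ 3 < 4 * t ^ 3 :=
        mul_lt_mul_of_pos_right hc' (pow_pos h0 3)
      nlinarith [mul_le_mul_of_nonneg_left hcb (le_of_lt hd), abs_nonneg c,
        mul_nonneg (abs_nonneg c) (pow_nonneg ht 3)]
  calc (0:ℝ) < 1 + c * (x ^ 3 + y ^ 3) + (t ^ 2) ^ 2 := hgoal
    _ = 1 + c * (x ^ 3 + y ^ 3) + (x ^ 2 + y ^ 2) ^ 2 := by rw [ht2]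
end

section
/- Let c₀ = 4 · 3^{−3/4} and F(t, x, y) = 1 − 24 c t + c(x³ + y³) + (x² + y²)². For every c ∈ (0, c₀) there exist T ∈ (0, ∞) and (x₀, y₀) ∈ ℝ² such that F(t, x, y) > 0 for all 0 ≤ t < T and all (x, y) ∈ ℝ², while F(T, x₀, y₀) = 0. In particular, the rational solution Q_{2,c} = −8 ∂_z ∂_{z̄} log F of the zero-energy Novikov–Veselov equation ceases to exist as a smooth function on all of ℝ² at the finite positive time T. -/
lemma stmt11_key (X Y : ℝ) : 0 ≤ 3*X^4+3*Y^4+6*X^2*Y^2+4*X^3+4*Y^3+1 := by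
  nlinarith [sq_nonneg (X+1), sq_nonneg (Y+1), sq_nonneg (X-1), sq_nonneg (Y-1), sq_nonneg (X*Y), sq_nonneg (X+Y), sq_nonneg (X*(X+1)), sq_nonneg (Y*(Y+1)), sq_nonneg (X^2+Y^2+X+Y), sq_nonneg (X*Y*3), sq_nonneg (X-Y), sq_nonneg (X^2-Y^2), sq_nonneg (X^2+Y^2-1)]

lemma stmt11_key2 (a x y : ℝ) (ha : 0 < a) :
    0 ≤ 3*x^4+3*y^4+6*x^2*y^2+4*a*x^3+4*a*y^3+a^4 := by
  have h := stmt11_key (x/a) (y/a)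
  have ha4 : (0:ℝ) < a^4 := by positivity
  have e : 3*x^4+3*y^4+6*x^2*y^2+4*a*x^3+4*a*y^3+a^4
      = a^4 * (3*(x/a)^4+3*(y/a)^4+6*(x/a)^2*(y/a)^2+4*(x/a)^3+4*(y/a)^3+1) := by
    field_simp
  rw [e]
  exact mul_nonneg ha4.le h

lemma stmt11_lb (c x y : ℝ) (hc0 : 0 < c) :
    -(27 * c ^ 4 / 256) ≤ c * (x ^ 3 + y ^ 3) + (x ^ 2 + y ^ 2) ^ 2 := by
  have h := stmt11_key2 (3*c/4) x y (by linarith)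
  nlinarith [h]

theorem stmt11 (c : ℝ) (hc0 : 0 < c) (hc : c < 4 * (3 : ℝ) ^ (-(3 : ℝ) / 4))
    (F : ℝ → ℝ → ℝ → ℝ)
    (hF : F = fun t x y => 1 - 24 * c * t + c * (x ^ 3 + y ^ 3) + (x ^ 2 + y ^ 2) ^ 2) :
    ∃ T : ℝ, 0 < T ∧ ∃ x₀ y₀ : ℝ,
      (∀ t x y : ℝ, 0 ≤ t → t < T → 0 < F t x y) ∧ F T x₀ y₀ = 0 := by
  have h3 : ((3:ℝ)^(-(3:ℝ)/4))^(4:ℕ) = 1/27 := by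
    rw [← Real.rpow_natCast ((3:ℝ)^(-(3:ℝ)/4)) 4, ← Real.rpow_mul (by norm_num : (0:ℝ) ≤ 3)]
    rw [show (-(3:ℝ)/4 * (4:ℕ)) = ((-3:ℤ):ℝ) by push_cast; ring, Real.rpow_intCast]
    norm_num
  have hc4 : c ^ 4 < 256/27 := by
    calc c ^ 4 < (4 * (3:ℝ)^(-(3:ℝ)/4)) ^ 4 := by
          exact pow_lt_pow_left₀ hc hc0.le (by norm_num)
      _ = 4^4 * ((3:ℝ)^(-(3:ℝ)/4))^(4:ℕ) := by ring
      _ = 256/27 := by rw [h3]; norm_num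
  have hM : 27 * c ^ 4 / 256 < 1 := by nlinarith
  refine ⟨(1 - 27 * c ^ 4 / 256) / (24 * c), div_pos (by linarith) (by positivity), -3*c/4, 0, ?_, ?_⟩
  · intro t x y ht htT
    have hlb := stmt11_lb c x y hc0
    have h24 : 24 * c * t < 1 - 27 * c ^ 4 / 256 := by
      have := (lt_div_iff₀ (by positivity : (0:ℝ) < 24 * c)).mp htT
      linarith [this]
    simp only [hF]
    linarith
  · simp only [hF]
    have hne : (24 : ℝ) * c ≠ 0 := by positivity
    field_simp
    ring
end

section
/- For every integer n ≥ 3, the polynomial z ↦ P_n(1, z) has at least one nonzero root of multiplicity at most two; that is, there exists z₀ ∈ ℂ with z₀ ≠ 0, P_n(1, z₀) = 0, and either ∂_z P_n(1, z₀) ≠ 0 or ∂_z² P_n(1, z₀) ≠ 0. -/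
open scoped Nat

/-- The Gould–Hopper polynomial `P_n(t, z) = n! Σ_{k=0}^{⌊n/3⌋} (8t)^k z^{n-3k} / (k! (n-3k)!)`. -/
noncomputable def GH (n : ℕ) (t : ℝ) (z : ℂ) : ℂ :=
  (n ! : ℂ) * ∑ k ∈ Finset.range (n / 3 + 1),
    ((8 * t : ℝ) : ℂ) ^ k * z ^ (n - 3 * k) / ((k ! : ℂ) * ((n - 3 * k)! : ℂ))

/-!
`P = P_n(1, ·)` solves the third-order equation `24 P''' + z P' = n P`. Differentiating it `k`
times gives `24 P^(k+3) + z P^(k+1) = (n - k) P^(k)`, so at a root of exact multiplicity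
`m ≥ 3` the case `k = m - 3` forces `P^(m)` to vanish there too, which is impossible. Hence every
root of `P` has multiplicity at most two, and since `deg P = n ≥ 3`, some root is nonzero.
-/

open Polynomial Finset

namespace Polynomial

variable {R : Type*} [CommRing R]

theorem X_mul_derivative_C_mul_X_pow (a : R) (e : ℕ) :
    X * derivative (C a * X ^ e) = C (a * e) * X ^ e := by
  cases e with
  | zero => simp
  | succ e => rw [derivative_C_mul_X_pow, Nat.add_sub_cancel, pow_succ]; ring

theorem iterate_derivative_C_mul_X_pow (a : R) (e k : ℕ) :
    derivative^[k] (C a * X ^ e) = C (a * e.descFactorial k) * X ^ (e - k) := by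
  rw [iterate_derivative_C_mul, iterate_derivative_X_pow_eq_C_mul, ← mul_assoc, ← C_mul]

theorem iterate_derivative_ode {p : R[X]} {a c : R}
    (h : C a * derivative^[3] p + X * derivative p = C c * p) (k : ℕ) :
    C a * derivative^[k + 3] p + X * derivative^[k + 1] p = C (c - k) * derivative^[k] p := by
  induction k with
  | zero => simpa using h
  | succ k ih =>
    have h' := congrArg derivative ih
    simp only [derivative_add, derivative_mul, derivative_C, derivative_X, zero_mul, zero_add,
      one_mul, ← Function.iterate_succ_apply' derivative] at h'
    simp only [Nat.cast_succ, map_sub, map_add, map_natCast, map_one] at h' ⊢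
    linear_combination h'

theorem rootMultiplicity_le_two_of_ode [IsDomain R] [CharZero R] {p : R[X]} {a c : R}
    (hp : p ≠ 0) (ha : a ≠ 0) (h : C a * derivative^[3] p + X * derivative p = C c * p)
    (t : R) : p.rootMultiplicity t ≤ 2 := by
  by_contra! hm
  set m := p.rootMultiplicity t
  have hlow : ∀ j < m, (derivative^[j] p).IsRoot t := fun _ hj ↦
    isRoot_iterate_derivative_of_lt_rootMultiplicity hj
  have htop : ¬ (derivative^[m] p).IsRoot t := fun hroot ↦
    lt_irrefl m <| lt_rootMultiplicity_of_isRoot_iterate_derivative hp fun j hj ↦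
      hj.lt_or_eq.elim (hlow j) (· ▸ hroot)
  have hk := congrArg (eval t) (iterate_derivative_ode h (m - 3))
  rw [show m - 3 + 3 = m by omega] at hk
  simp only [eval_add, eval_mul, eval_C, eval_X, (hlow _ (by omega : m - 3 + 1 < m)).eq_zero,
    (hlow _ (by omega : m - 3 < m)).eq_zero, mul_zero, add_zero] at hk
  exact htop ((mul_eq_zero.mp hk).resolve_left ha)

theorem exists_isRoot_ne_of_rootMultiplicity_lt_natDegree {K : Type*} [Field K] [IsAlgClosed K]
    {p : K[X]} {a : K} (h : p.rootMultiplicity a < p.natDegree) : ∃ z, z ≠ a ∧ p.IsRoot z := by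
  classical
  by_contra! hall
  have hp : p ≠ 0 := by rintro rfl; simp at h
  have hcount : p.roots.count a = Multiset.card p.roots :=
    Multiset.count_eq_card.mpr fun z hz ↦
      by_contra fun hza ↦ hall z (Ne.symm hza) ((mem_roots hp).mp hz)
  rw [count_roots, IsAlgClosed.card_roots_eq_natDegree] at hcount
  omega

end Polynomial

noncomputable def ghCoeff (n k : ℕ) : ℂ := n ! * 8 ^ k / (k ! * (n - 3 * k)!)

noncomputable def ghPoly (n : ℕ) : ℂ[X] :=
  ∑ k ∈ range (n / 3 + 1), C (ghCoeff n k) * X ^ (n - 3 * k)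

theorem eval_ghPoly (n : ℕ) (z : ℂ) : (ghPoly n).eval z = GH n 1 z := by
  simp only [GH, ghPoly, ghCoeff, eval_finsetSum, eval_mul, eval_C, eval_pow, eval_X, mul_sum]
  refine sum_congr rfl fun k _ ↦ ?_
  push_cast
  ring

theorem coeff_ghPoly_self (n : ℕ) : (ghPoly n).coeff n = 1 := by
  rw [ghPoly, finsetSum_coeff, sum_eq_single_of_mem 0 (by simp)]
  · simp [ghCoeff, Nat.factorial_ne_zero]
  · intro k hk hk0
    have := mem_range.mp hk
    rw [coeff_C_mul_X_pow, if_neg (by omega)]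

theorem ghCoeff_succ {n k : ℕ} (h : 3 * (k + 1) ≤ n) :
    3 * (k + 1) * ghCoeff n (k + 1) = 24 * (n - 3 * k).descFactorial 3 * ghCoeff n k := by
  have hfac : (n - 3 * (k + 1))! * (n - 3 * k).descFactorial 3 = (n - 3 * k)! := by
    rw [← Nat.factorial_mul_descFactorial (by omega : 3 ≤ n - 3 * k)]
    congr 2
  have hdesc : ((n - 3 * k).descFactorial 3 : ℂ) ≠ 0 := by
    exact_mod_cast (Nat.descFactorial_pos.mpr (by omega)).ne'
  simp only [ghCoeff, ← hfac, Nat.factorial_succ]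
  push_cast
  field_simp
  ring

theorem ghPoly_ode (n : ℕ) :
    C 24 * derivative^[3] (ghPoly n) + X * derivative (ghPoly n) = C (n : ℂ) * ghPoly n := by
  have hthird : C 24 * derivative^[3] (ghPoly n) =
      ∑ k ∈ range (n / 3 + 1), C (3 * k * ghCoeff n k) * X ^ (n - 3 * k) := by
    -- the top term has degree `< 3` and is killed by `derivative^[3]`; the `k = 0` term on the
    -- right vanishes, and the rest matches after the shift `k ↦ k + 1`
    rw [ghPoly, iterate_derivative_sum, mul_sum, sum_range_succ, sum_range_succ']
    simp only [iterate_derivative_C_mul_X_pow, ← mul_assoc, ← C_mul,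
      Nat.descFactorial_eq_zero_iff_lt.mpr (by omega : n - 3 * (n / 3) < 3)]
    simp only [Nat.cast_zero, mul_zero, zero_mul, C_0, add_zero]
    refine sum_congr rfl fun k hk ↦ ?_
    have hk3 : 3 * (k + 1) ≤ n := by have := mem_range.mp hk; omega
    rw [show n - 3 * k - 3 = n - 3 * (k + 1) by omega]
    push_cast
    rw [ghCoeff_succ hk3]
    ring_nf
  rw [hthird, ghPoly, derivative_sum, mul_sum, mul_sum, ← sum_add_distrib]
  refine sum_congr rfl fun k hk ↦ ?_
  have hk3 : 3 * k ≤ n := by have := mem_range.mp hk; omega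
  rw [X_mul_derivative_C_mul_X_pow, ← mul_assoc, ← C_mul, ← add_mul, ← C_add, Nat.cast_sub hk3]
  push_cast
  ring_nf

theorem stmt14 (n : ℕ) (hn : 3 ≤ n) :
    ∃ z₀ : ℂ, z₀ ≠ 0 ∧ GH n 1 z₀ = 0 ∧
      (deriv (GH n 1) z₀ ≠ 0 ∨ deriv (deriv (GH n 1)) z₀ ≠ 0) := by
  set P := ghPoly n
  have hdeg : n ≤ P.natDegree := le_natDegree_of_ne_zero (by simp [P, coeff_ghPoly_self])
  have hP : P ≠ 0 := ne_zero_of_natDegree_gt (by omega : 0 < P.natDegree)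
  have hmult : ∀ w, P.rootMultiplicity w ≤ 2 :=
    rootMultiplicity_le_two_of_ode hP (by norm_num) (ghPoly_ode n)
  obtain ⟨z₀, hz₀, hroot⟩ :=
    exists_isRoot_ne_of_rootMultiplicity_lt_natDegree (p := P) (a := 0) (by linarith [hmult 0])
  have hGH : GH n 1 = fun z ↦ P.eval z := funext fun z ↦ (eval_ghPoly n z).symm
  have hderiv (p : ℂ[X]) : deriv (fun z ↦ p.eval z) = fun z ↦ p.derivative.eval z :=
    funext fun _ ↦ p.deriv
  refine ⟨z₀, hz₀, hGH ▸ hroot, ?_⟩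
  rw [hGH, hderiv, hderiv]
  by_contra! hcrit
  have := lt_rootMultiplicity_of_isRoot_iterate_derivative (n := 2) hP fun m hm ↦ by
    interval_cases m
    exacts [hroot, hcrit.1, hcrit.2]
  exact (hmult z₀).not_gt this
end

section
/- For every integer n ≥ 3, the solution Q_{n,0} of the zero-energy Novikov–Veselov equation blows up in infinite time in L²: ∫_{ℝ²} Q_{n,0}(t, x, y)² dx dy → +∞ as t → +∞ and as t → −∞, where Q_{n,0}(t, x, y) = −8 n² |P_{n−1}(t, x + iy)|² / (1 + |P_n(t, x + iy)|²)². -/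
/-!
Write `t = λ³ s` and `z = λ w`; then `P_n(t, λ w) = λⁿ P_n(s, w)`. Fix `s = ±1` and a root `z₀` of
`P_n(s, ·)`, of multiplicity `m`. Since `P_n(s, ·)` is monic with vanishing `zⁿ⁻¹`-coefficient and
is not `zⁿ`, `m < n`; since `∂_z P_n = n P_{n-1}`, near `z₀` we have `|P_n(s, w)| ≍ |w - z₀|^m` and
`|P_{n-1}(s, w)| ≍ |w - z₀|^(m-1)`. Taking `λ = μ^m`, on a disc of radius `≍ μ^(-n)` next to `z₀`
the denominator `1 + |P_n(t, λ w)|²` stays bounded while `|P_{n-1}(t, λ w)| ≳ μ^(n-m)`, so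
`∫ Q² ≳ λ² · μ^(-2n) · μ^(4(n-m)) = μ^(2(n-m)) ≥ μ`. The integral is finite (so that this lower
bound is not defeated by the junk value `0`) because `|P_{n-1}|² / (1 + |P_n|²) = O(|z|⁻²)`.
-/

open scoped Nat
open MeasureTheory Filter

/-- The solution `Q_{n,0}` of the zero-energy Novikov–Veselov equation. -/
noncomputable def Qn (n : ℕ) (t x y : ℝ) : ℝ :=
  -8 * (n : ℝ) ^ 2 * ‖GH (n - 1) t ((x : ℂ) + (y : ℂ) * Complex.I)‖ ^ 2
    / (1 + ‖GH n t ((x : ℂ) + (y : ℂ) * Complex.I)‖ ^ 2) ^ 2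

open Polynomial Real
open scoped Topology

namespace Polynomial

variable {𝕜 : Type*} [NormedField 𝕜]

theorem exists_norm_eval_le_mul_one_add_norm_pow (p : 𝕜[X]) {d : ℕ} (hd : p.natDegree ≤ d) :
    ∃ C ≥ 0, ∀ z : 𝕜, ‖p.eval z‖ ≤ C * (1 + ‖z‖) ^ d := by
  refine ⟨∑ i ∈ Finset.range (p.natDegree + 1), ‖p.coeff i‖, by positivity, fun z => ?_⟩
  rw [eval_eq_sum_range, Finset.sum_mul]
  refine (norm_sum_le _ _).trans (Finset.sum_le_sum fun i hi => ?_)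
  rw [norm_mul, norm_pow]
  gcongr
  calc ‖z‖ ^ i ≤ (1 + ‖z‖) ^ i := by gcongr; linarith
    _ ≤ (1 + ‖z‖) ^ d := pow_le_pow_right₀ (by simp) (by grind)

theorem Monic.exists_mul_one_add_norm_pow_le {p : 𝕜[X]} (hp : p.Monic) (hdeg : 0 < p.natDegree) :
    ∃ c > 0, ∀ z : 𝕜, c * (1 + ‖z‖) ^ p.natDegree ≤ 1 + ‖p.eval z‖ := by
  set n := p.natDegree
  obtain ⟨C, hC0, hC⟩ :=
    p.eraseLead.exists_norm_eval_le_mul_one_add_norm_pow p.eraseLead_natDegree_le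
  set R : ℝ := 2 + 2 ^ (n + 1) * C
  refine ⟨min (2 ^ (n + 1))⁻¹ (R ^ n)⁻¹, by positivity, fun z => ?_⟩
  set u := 1 + ‖z‖
  have hsplit : p.eval z = z ^ n + p.eraseLead.eval z := by
    conv_lhs => rw [← p.eraseLead_add_C_mul_X_pow]
    simp [hp.leadingCoeff, add_comm, n]
  rcases le_or_gt R u with hlarge | hsmall
  · have hR : 2 ≤ R := by simp only [R]; linarith [show 0 ≤ 2 ^ (n + 1) * C by positivity]
    have hu : u ≤ 2 * ‖z‖ := by linarith
    have hlow : u ^ n ≤ 2 ^ n * ‖z‖ ^ n := by rw [← mul_pow]; gcongr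
    have hr : 2 ^ (n + 1) * (C * u ^ (n - 1)) ≤ u ^ n := by
      calc 2 ^ (n + 1) * (C * u ^ (n - 1)) = (2 ^ (n + 1) * C) * u ^ (n - 1) := by ring
        _ ≤ u * u ^ (n - 1) := by gcongr; linarith
        _ = u ^ n := by rw [← pow_succ']; congr 1; omega
    have htri : ‖z‖ ^ n ≤ ‖p.eval z‖ + C * u ^ (n - 1) := by
      rw [← norm_pow, eq_sub_of_add_eq hsplit.symm]
      exact (norm_sub_le _ _).trans (by gcongr; exact hC z)
    calc min (2 ^ (n + 1))⁻¹ (R ^ n)⁻¹ * u ^ n ≤ (2 ^ (n + 1))⁻¹ * u ^ n := by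
          gcongr; exact min_le_left _ _
      _ ≤ ‖p.eval z‖ := by
          rw [inv_mul_le_iff₀ (by positivity)]
          have := mul_le_mul_of_nonneg_left htri (pow_nonneg zero_le_two n)
          rw [pow_succ] at hr ⊢
          nlinarith
      _ ≤ 1 + ‖p.eval z‖ := by linarith
  · calc min (2 ^ (n + 1))⁻¹ (R ^ n)⁻¹ * u ^ n ≤ (R ^ n)⁻¹ * R ^ n := by
          gcongr
          exact min_le_right _ _
      _ = 1 := inv_mul_cancel₀ (by positivity)
      _ ≤ 1 + ‖p.eval z‖ := by simp

theorem exists_norm_eval_near_rootMultiplicity {p : 𝕜[X]} (hp : p ≠ 0) (a : 𝕜) :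
    ∃ c > 0, ∃ L > 0, ∀ᶠ w in 𝓝 a,
      c * ‖w - a‖ ^ p.rootMultiplicity a ≤ ‖p.eval w‖ ∧
        ‖p.eval w‖ ≤ L * ‖w - a‖ ^ p.rootMultiplicity a := by
  set g := p /ₘ (X - C a) ^ p.rootMultiplicity a
  have hga : 0 < ‖g.eval a‖ := norm_pos_iff.2 (eval_divByMonic_pow_rootMultiplicity_ne_zero a hp)
  have hfac (w : 𝕜) : ‖p.eval w‖ = ‖w - a‖ ^ p.rootMultiplicity a * ‖g.eval w‖ := by
    conv_lhs => rw [← p.pow_mul_divByMonic_rootMultiplicity_eq a]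
    rw [eval_mul, eval_pow, norm_mul, norm_pow]
    simp [g]
  refine ⟨‖g.eval a‖ / 2, by positivity, 2 * ‖g.eval a‖, by positivity, ?_⟩
  filter_upwards [g.continuousAt.eventually_mem (Metric.ball_mem_nhds _ (half_pos hga))] with w hw
  rw [Metric.mem_ball, dist_eq_norm] at hw
  have h1 := norm_sub_norm_le (g.eval a) (g.eval w)
  have h2 := norm_sub_norm_le (g.eval w) (g.eval a)
  rw [norm_sub_rev] at h1
  rw [hfac]
  constructor
  · rw [mul_comm]; gcongr; linarith
  · rw [mul_comm]; gcongr; linarith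

theorem Monic.rootMultiplicity_lt_natDegree {K : Type*} [Field K] [CharZero K] {p : K[X]}
    (hp : p.Monic) (hnext : p.nextCoeff = 0) (hX : p ≠ X ^ p.natDegree) (a : K) :
    p.rootMultiplicity a < p.natDegree := by
  set n := p.natDegree
  by_contra! h
  have hdvd : (X - C a) ^ n ∣ p := (pow_dvd_pow _ h).trans (p.pow_rootMultiplicity_dvd a)
  have heq : p = (X - C a) ^ n :=
    eq_of_monic_of_dvd_of_natDegree_le ((monic_X_sub_C a).pow n) hp hdvd (by simp [n])
  have ha : n = 0 ∨ a = 0 := by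
    rw [heq, nextCoeff_pow (monic_X_sub_C a), nextCoeff_X_sub_C] at hnext
    simpa using hnext
  rcases ha with hn0 | rfl
  · exact hX (by rw [heq, hn0, pow_zero, pow_zero])
  · exact hX (by simpa using heq)

end Polynomial

noncomputable def GHCoeff (n : ℕ) (t : ℝ) (k : ℕ) : ℂ :=
  (n ! : ℂ) * ((8 * t : ℝ) : ℂ) ^ k / ((k ! : ℂ) * ((n - 3 * k)! : ℂ))

noncomputable def GHPoly (n : ℕ) (t : ℝ) : ℂ[X] :=
  ∑ k ∈ Finset.range (n / 3 + 1), C (GHCoeff n t k) * X ^ (n - 3 * k)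

theorem eval_GHPoly (n : ℕ) (t : ℝ) (z : ℂ) : (GHPoly n t).eval z = GH n t z := by
  simp only [GHPoly, GH, GHCoeff, eval_finsetSum, eval_mul, eval_C, eval_pow, eval_X,
    Finset.mul_sum]
  exact Finset.sum_congr rfl fun k _ => by ring

theorem coeff_GHPoly_sub (n : ℕ) (t : ℝ) {j : ℕ} (hj : j ≤ n) :
    (GHPoly n t).coeff (n - j) = if 3 ∣ j then GHCoeff n t (j / 3) else 0 := by
  simp only [GHPoly, finsetSum_coeff, coeff_C_mul_X_pow]
  have hiff : ∀ k ∈ Finset.range (n / 3 + 1), n - j = n - 3 * k ↔ k = j / 3 ∧ 3 ∣ j := by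
    intro k hk
    rw [Finset.mem_range] at hk
    omega
  rw [Finset.sum_congr rfl fun k hk => if_congr (hiff k hk) rfl rfl]
  split_ifs with h3
  · rw [Finset.sum_eq_single (j / 3)] <;> simp +contextual [h3]
    omega
  · simp [h3]

theorem GHCoeff_zero (n : ℕ) (t : ℝ) : GHCoeff n t 0 = 1 := by
  simp [GHCoeff, Nat.factorial_ne_zero]

theorem natDegree_GHPoly_le (n : ℕ) (t : ℝ) : (GHPoly n t).natDegree ≤ n :=
  natDegree_sum_le_of_forall_le _ _ fun _ _ => natDegree_C_mul_X_pow_le _ _ |>.trans (by omega)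

theorem coeff_GHPoly_self (n : ℕ) (t : ℝ) : (GHPoly n t).coeff n = 1 := by
  simpa [GHCoeff_zero] using coeff_GHPoly_sub n t (Nat.zero_le n)

theorem monic_GHPoly (n : ℕ) (t : ℝ) : (GHPoly n t).Monic :=
  monic_of_natDegree_le_of_coeff_eq_one n (natDegree_GHPoly_le n t) (coeff_GHPoly_self n t)

theorem natDegree_GHPoly (n : ℕ) (t : ℝ) : (GHPoly n t).natDegree = n :=
  natDegree_eq_of_le_of_coeff_ne_zero (natDegree_GHPoly_le n t)
    (by rw [coeff_GHPoly_self]; exact one_ne_zero)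

theorem nextCoeff_GHPoly {n : ℕ} (hn : 1 ≤ n) (t : ℝ) : (GHPoly n t).nextCoeff = 0 := by
  rw [nextCoeff_of_natDegree_pos (by rw [natDegree_GHPoly]; omega), natDegree_GHPoly,
    coeff_GHPoly_sub n t hn]
  simp

theorem GHPoly_ne_X_pow {n : ℕ} (hn : 3 ≤ n) {t : ℝ} (ht : t ≠ 0) : GHPoly n t ≠ X ^ n := by
  intro h
  have h3 := coeff_GHPoly_sub n t hn
  rw [h, coeff_X_pow, if_neg (by omega)] at h3
  simp [GHCoeff, ht, Nat.factorial_ne_zero, eq_comm (a := (0 : ℂ))] at h3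

theorem derivative_GHPoly {n : ℕ} (hn : 1 ≤ n) (t : ℝ) :
    derivative (GHPoly n t) = C (n : ℂ) * GHPoly (n - 1) t := by
  have hterm : ∀ k ∈ Finset.range ((n - 1) / 3 + 1),
      derivative (C (GHCoeff n t k) * X ^ (n - 3 * k)) =
        C (n : ℂ) * (C (GHCoeff (n - 1) t k) * X ^ (n - 1 - 3 * k)) := by
    intro k hk
    obtain ⟨j, rfl⟩ : ∃ j, n = j + 3 * k + 1 := ⟨n - 1 - 3 * k, by grind⟩
    rw [derivative_C_mul_X_pow, ← mul_assoc, ← C_mul, show j + 3 * k + 1 - 3 * k - 1 = j by omega,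
      show j + 3 * k + 1 - 1 - 3 * k = j by omega]
    congr 2
    simp only [GHCoeff, show j + 3 * k + 1 - 3 * k = j + 1 by omega, Nat.add_sub_cancel,
      Nat.factorial_succ]
    push_cast
    field_simp
  have hsub : Finset.range ((n - 1) / 3 + 1) ⊆ Finset.range (n / 3 + 1) :=
    Finset.range_subset_range.2 (by omega)
  rw [GHPoly, derivative_sum, GHPoly, Finset.mul_sum, ← Finset.sum_congr rfl hterm]
  refine (Finset.sum_subset hsub fun k hk hk' => ?_).symm
  simp only [Finset.mem_range] at hk hk'
  rw [show n - 3 * k = 0 by omega, pow_zero, mul_one, derivative_C]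

theorem rootMultiplicity_GHPoly_lt {n : ℕ} (hn : 3 ≤ n) {t : ℝ} (ht : t ≠ 0) (a : ℂ) :
    (GHPoly n t).rootMultiplicity a < n := by
  have := (monic_GHPoly n t).rootMultiplicity_lt_natDegree (nextCoeff_GHPoly (by omega) t)
    (by rw [natDegree_GHPoly]; exact GHPoly_ne_X_pow hn ht) a
  rwa [natDegree_GHPoly] at this

theorem rootMultiplicity_GHPoly_pred {n : ℕ} (hn : 1 ≤ n) {t : ℝ} {a : ℂ}
    (ha : (GHPoly n t).IsRoot a) :
    (GHPoly (n - 1) t).rootMultiplicity a = (GHPoly n t).rootMultiplicity a - 1 := by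
  have hne : C (n : ℂ) * GHPoly (n - 1) t ≠ 0 :=
    mul_ne_zero (by simp; omega) (monic_GHPoly _ t).ne_zero
  rw [← derivative_rootMultiplicity_of_root ha, derivative_GHPoly hn, rootMultiplicity_mul hne,
    rootMultiplicity_C, zero_add]

theorem GH_weighted_homogeneous (n : ℕ) (s lam : ℝ) (w : ℂ) :
    GH n (lam ^ 3 * s) (lam * w) = (lam : ℂ) ^ n * GH n s w := by
  simp only [GH, Finset.mul_sum]
  refine Finset.sum_congr rfl fun k hk => ?_
  obtain ⟨j, rfl⟩ : ∃ j, n = 3 * k + j := ⟨n - 3 * k, by grind⟩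
  rw [show 3 * k + j - 3 * k = j by omega]
  push_cast
  ring

theorem continuous_GH (n : ℕ) (t : ℝ) : Continuous (GH n t) := by
  simpa only [eval_GHPoly] using (GHPoly n t).continuous

theorem exists_root_GH_local_bounds {n : ℕ} (hn : 3 ≤ n) {s : ℝ} (hs : s ≠ 0) :
    ∃ z₀ : ℂ, ∃ m : ℕ, 1 ≤ m ∧ m < n ∧ ∃ ρ > 0, ∃ c > 0, ∃ L > 0, ∀ w : ℂ, ‖w - z₀‖ < ρ →
      ‖GH n s w‖ ≤ L * ‖w - z₀‖ ^ m ∧ c * ‖w - z₀‖ ^ (m - 1) ≤ ‖GH (n - 1) s w‖ := by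
  obtain ⟨z₀, hz₀⟩ := Complex.exists_root (f := GHPoly n s)
    (natDegree_pos_iff_degree_pos.1 (by rw [natDegree_GHPoly]; omega))
  obtain ⟨_, _, L, hL, hupper⟩ :=
    exists_norm_eval_near_rootMultiplicity (monic_GHPoly n s).ne_zero z₀
  obtain ⟨c, hc, _, _, hlower⟩ :=
    exists_norm_eval_near_rootMultiplicity (monic_GHPoly (n - 1) s).ne_zero z₀
  rw [rootMultiplicity_GHPoly_pred (by omega) hz₀] at hlower
  obtain ⟨ρ, hρ, hball⟩ := Metric.eventually_nhds_iff.1 (hupper.and hlower)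
  refine ⟨z₀, _, (rootMultiplicity_pos (monic_GHPoly n s).ne_zero).2 hz₀,
    rootMultiplicity_GHPoly_lt hn hs z₀, ρ, hρ, c, hc, L, hL, fun w hw => ?_⟩
  obtain ⟨⟨-, hup⟩, hlow, -⟩ := hball (by rwa [dist_eq_norm])
  rw [eval_GHPoly] at hup hlow
  exact ⟨hup, hlow⟩

noncomputable def QnC (n : ℕ) (t : ℝ) (z : ℂ) : ℝ :=
  -8 * (n : ℝ) ^ 2 * ‖GH (n - 1) t z‖ ^ 2 / (1 + ‖GH n t z‖ ^ 2) ^ 2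

theorem integral_sq_Qn_eq (n : ℕ) (t : ℝ) :
    ∫ p : ℝ × ℝ, (Qn n t p.1 p.2) ^ 2 = ∫ z : ℂ, QnC n t z ^ 2 := by
  rw [← (Complex.volume_preserving_equiv_real_prod.symm).integral_comp']
  simp [Qn, QnC, Complex.measurableEquivRealProd_symm_apply, Complex.mk_eq_add_mul_I]

theorem sq_QnC (n : ℕ) (t : ℝ) (z : ℂ) :
    QnC n t z ^ 2 = 64 * (n : ℝ) ^ 4 * ‖GH (n - 1) t z‖ ^ 4 / (1 + ‖GH n t z‖ ^ 2) ^ 4 := by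
  rw [QnC, div_pow, ← pow_mul]
  ring

theorem continuous_QnC (n : ℕ) (t : ℝ) : Continuous (QnC n t) := by
  have := continuous_GH (n - 1) t
  have := continuous_GH n t
  exact Continuous.div (by fun_prop) (by fun_prop) fun _ => by positivity

theorem exists_norm_GH_pred_sq_div_le {n : ℕ} (hn : 1 ≤ n) (t : ℝ) :
    ∃ K, ∀ z : ℂ, ‖GH (n - 1) t z‖ ^ 2 / (1 + ‖GH n t z‖ ^ 2) ≤ K / (1 + ‖z‖) ^ 2 := by
  obtain ⟨C, -, hC⟩ :=
    (GHPoly (n - 1) t).exists_norm_eval_le_mul_one_add_norm_pow (natDegree_GHPoly_le (n - 1) t)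
  obtain ⟨c, hc, hc'⟩ := (monic_GHPoly n t).exists_mul_one_add_norm_pow_le
    (by rw [natDegree_GHPoly]; omega)
  refine ⟨2 * C ^ 2 / c ^ 2, fun z => ?_⟩
  simp only [eval_GHPoly, natDegree_GHPoly] at hC hc'
  set A := ‖GH (n - 1) t z‖
  set B := ‖GH n t z‖
  set u := 1 + ‖z‖
  have hA : A * u ≤ C * u ^ n := by
    calc A * u ≤ C * u ^ (n - 1) * u := by gcongr; exact hC z
      _ = C * u ^ n := by rw [mul_assoc, ← pow_succ, Nat.sub_add_cancel hn]
  have hB : (c * u ^ n) ^ 2 ≤ 2 * (1 + B ^ 2) :=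
    calc (c * u ^ n) ^ 2 ≤ (1 + B) ^ 2 := by gcongr; exact hc' z
      _ ≤ 2 * (1 + B ^ 2) := by nlinarith [sq_nonneg (1 - B)]
  rw [div_le_div_iff₀ (by positivity) (by positivity), div_mul_eq_mul_div,
    le_div_iff₀ (by positivity)]
  calc A ^ 2 * u ^ 2 * c ^ 2 = (A * u) ^ 2 * c ^ 2 := by ring
    _ ≤ (C * u ^ n) ^ 2 * c ^ 2 := by gcongr
    _ = C ^ 2 * (c * u ^ n) ^ 2 := by ring
    _ ≤ C ^ 2 * (2 * (1 + B ^ 2)) := by gcongr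
    _ = 2 * C ^ 2 * (1 + B ^ 2) := by ring

theorem integrable_sq_QnC {n : ℕ} (hn : 1 ≤ n) (t : ℝ) :
    Integrable fun z : ℂ => QnC n t z ^ 2 := by
  obtain ⟨K, hK⟩ := exists_norm_GH_pred_sq_div_le hn t
  have hint : Integrable fun z : ℂ => (1 + ‖z‖) ^ (-(4 : ℝ)) :=
    integrable_one_add_norm (by simp; norm_num)
  refine (hint.const_mul (64 * (n : ℝ) ^ 4 * K ^ 2)).mono'
    ((continuous_QnC n t).pow 2).aestronglyMeasurable (ae_of_all _ fun z => ?_)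
  have hu : 0 < 1 + ‖z‖ := by positivity
  have hB : 1 ≤ 1 + ‖GH n t z‖ ^ 2 := by simp
  have hratio : ‖GH (n - 1) t z‖ ^ 2 / (1 + ‖GH n t z‖ ^ 2) ^ 2 ≤ K / (1 + ‖z‖) ^ 2 :=
    (div_le_div_of_nonneg_left (by positivity) (by positivity)
      (le_self_pow₀ hB two_ne_zero)).trans (hK z)
  rw [Real.norm_of_nonneg (sq_nonneg _), Real.rpow_neg hu.le, show (4 : ℝ) = (4 : ℕ) by norm_num,
    Real.rpow_natCast]
  calc QnC n t z ^ 2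
      = 64 * (n : ℝ) ^ 4 * (‖GH (n - 1) t z‖ ^ 2 / (1 + ‖GH n t z‖ ^ 2) ^ 2) ^ 2 := by
        rw [sq_QnC, div_pow, ← pow_mul]; ring
    _ ≤ 64 * (n : ℝ) ^ 4 * (K / (1 + ‖z‖) ^ 2) ^ 2 := by gcongr
    _ = 64 * (n : ℝ) ^ 4 * K ^ 2 * ((1 + ‖z‖) ^ 4)⁻¹ := by rw [div_pow, ← pow_mul]; ring

theorem integral_eq_sq_mul_integral_comp_mul (f : ℂ → ℝ) {lam : ℝ} (hlam : lam ≠ 0) :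
    ∫ z, f z = lam ^ 2 * ∫ w, f (lam * w) := by
  have h := Measure.integral_comp_smul volume f lam
  simp only [Complex.real_smul, Complex.finrank_real_complex, smul_eq_mul] at h
  rw [h, abs_of_pos (by positivity), ← mul_assoc, mul_inv_cancel₀ (by positivity), one_mul]

theorem GH_bounds_on_rescaled_ball {n m : ℕ} (hm : 1 ≤ m) (hmn : m ≤ n) {s ρ c L μ : ℝ}
    {z₀ w : ℂ} (hρ : 0 < ρ) (hc : 0 ≤ c) (hL : 0 ≤ L) (hμ : 1 ≤ μ)
    (hloc : ∀ w : ℂ, ‖w - z₀‖ < ρ →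
      ‖GH n s w‖ ≤ L * ‖w - z₀‖ ^ m ∧ c * ‖w - z₀‖ ^ (m - 1) ≤ ‖GH (n - 1) s w‖)
    (hw : w ∈ Metric.ball (z₀ + ((ρ / μ ^ n / 2 : ℝ) : ℂ)) (ρ / μ ^ n / 4)) :
    ‖GH n ((μ ^ m) ^ 3 * s) ((μ ^ m : ℝ) * w)‖ ≤ L * ρ ^ m ∧
      c * (ρ / 4) ^ (m - 1) * μ ^ (n - m) ≤ ‖GH (n - 1) ((μ ^ m) ^ 3 * s) ((μ ^ m : ℝ) * w)‖ := by
  set r := ρ / μ ^ n with hr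
  have hμ0 : 0 < μ := by linarith
  have hr0 : 0 < r := by positivity
  have hrρ : r ≤ ρ := div_le_self hρ.le (one_le_pow₀ hμ)
  have hcenter : ‖z₀ + ((r / 2 : ℝ) : ℂ) - z₀‖ = r / 2 := by
    rw [add_sub_cancel_left, Complex.norm_real, Real.norm_of_nonneg (by positivity)]
  rw [Metric.mem_ball, dist_eq_norm] at hw
  have hfar : r / 4 ≤ ‖w - z₀‖ := by
    have := norm_sub_norm_le (z₀ + ((r / 2 : ℝ) : ℂ) - z₀) (z₀ + ((r / 2 : ℝ) : ℂ) - w)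
    rw [hcenter, norm_sub_rev] at this
    simp only [sub_sub_sub_cancel_left] at this
    linarith
  have hnear : ‖w - z₀‖ < r := by
    have := norm_add_le (w - (z₀ + ((r / 2 : ℝ) : ℂ))) (z₀ + ((r / 2 : ℝ) : ℂ) - z₀)
    rw [hcenter, sub_add_sub_cancel] at this
    linarith
  obtain ⟨hup, hlow⟩ := hloc w (hnear.trans_le hrρ)
  simp only [GH_weighted_homogeneous, norm_mul, norm_pow, Complex.norm_real,
    Real.norm_of_nonneg hμ0.le]
  constructor
  · calc (μ ^ m) ^ n * ‖GH n s w‖ ≤ (μ ^ m) ^ n * (L * r ^ m) := by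
          gcongr; exact hup.trans (by gcongr)
      _ = L * ρ ^ m := by rw [hr, div_pow, ← pow_mul, ← pow_mul, mul_comm n m]; field_simp
  · have hpow : (μ ^ m) ^ (n - 1) * (r / 4) ^ (m - 1) = (ρ / 4) ^ (m - 1) * μ ^ (n - m) := by
      obtain ⟨k, rfl⟩ : ∃ k, m = k + 1 := ⟨m - 1, by omega⟩
      obtain ⟨d, rfl⟩ : ∃ d, n = k + 1 + d := ⟨n - (k + 1), by omega⟩
      have hsplit : (μ ^ (k + 1)) ^ (k + d) = (μ ^ (k + 1 + d)) ^ k * μ ^ d := by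
        rw [← pow_mul, ← pow_mul, ← pow_add]
        ring_nf
      rw [hr, show k + 1 + d - 1 = k + d by omega, show k + 1 + d - (k + 1) = d by omega,
        Nat.add_sub_cancel, hsplit, div_right_comm, div_pow]
      field_simp
    calc c * (ρ / 4) ^ (m - 1) * μ ^ (n - m) = (μ ^ m) ^ (n - 1) * (c * (r / 4) ^ (m - 1)) := by
          rw [mul_assoc, ← hpow]; ring
      _ ≤ (μ ^ m) ^ (n - 1) * ‖GH (n - 1) s w‖ := by gcongr; refine le_trans ?_ hlow; gcongr

theorem exists_mul_le_integral_sq_QnC {n : ℕ} (hn : 3 ≤ n) {s : ℝ} (hs : s ≠ 0) :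
    ∃ k : ℕ, k ≠ 0 ∧ ∃ K > 0, ∀ μ : ℝ, 1 ≤ μ → K * μ ≤ ∫ z : ℂ, QnC n (μ ^ k * s) z ^ 2 := by
  obtain ⟨z₀, m, hm1, hmn, ρ, hρ, c, hc, L, hL, hloc⟩ := exists_root_GH_local_bounds hn hs
  set α := c * (ρ / 4) ^ (m - 1)
  set D := 64 * (n : ℝ) ^ 4 * α ^ 4 / (1 + (L * ρ ^ m) ^ 2) ^ 4
  have hD : 0 < D := by
    have : (0 : ℝ) < n := by positivity
    positivity
  refine ⟨3 * m, by omega, D * (π * (ρ / 4) ^ 2), by positivity, fun μ hμ => ?_⟩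
  have hμ0 : 0 < μ := by linarith
  set lam := μ ^ m
  have hlam : 0 < lam := by positivity
  set T := Metric.ball (z₀ + ((ρ / μ ^ n / 2 : ℝ) : ℂ)) (ρ / μ ^ n / 4)
  have hpt : ∀ w ∈ T, D * μ ^ (4 * (n - m)) ≤ QnC n (lam ^ 3 * s) ((lam : ℂ) * w) ^ 2 := by
    intro w hw
    obtain ⟨hup, hlow⟩ := GH_bounds_on_rescaled_ball hm1 hmn.le hρ hc.le hL.le hμ hloc hw
    rw [sq_QnC]
    calc D * μ ^ (4 * (n - m))
        = 64 * (n : ℝ) ^ 4 * (α * μ ^ (n - m)) ^ 4 / (1 + (L * ρ ^ m) ^ 2) ^ 4 := by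
          rw [pow_mul]; ring
      _ ≤ _ := by gcongr
  have hint : Integrable fun w : ℂ => QnC n (lam ^ 3 * s) ((lam : ℂ) * w) ^ 2 := by
    simpa [Complex.real_smul] using
      (integrable_sq_QnC (by omega) (lam ^ 3 * s)).comp_smul (R := lam) (by positivity)
  have hvol : volume.real T = π * (ρ / μ ^ n / 4) ^ 2 := by
    rw [measureReal_def, Complex.volume_ball, ENNReal.toReal_mul, ENNReal.toReal_pow,
      ENNReal.toReal_ofReal (by positivity), ENNReal.coe_toReal, NNReal.coe_real_pi, mul_comm]
  rw [show μ ^ (3 * m) = lam ^ 3 by ring, integral_eq_sq_mul_integral_comp_mul _ hlam.ne']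
  calc D * (π * (ρ / 4) ^ 2) * μ ≤ D * (π * (ρ / 4) ^ 2) * μ ^ (2 * (n - m)) := by
        gcongr; exact le_self_pow₀ hμ (by omega)
    _ = lam ^ 2 * (volume.real T • (D * μ ^ (4 * (n - m)))) := by
        have hsplit : μ ^ n = lam * μ ^ (n - m) := by rw [← pow_add, Nat.add_sub_cancel' hmn.le]
        rw [hvol, smul_eq_mul, hsplit]
        field_simp
        ring
    _ ≤ lam ^ 2 * ∫ w in T, QnC n (lam ^ 3 * s) (lam * w) ^ 2 := by
        gcongr
        exact setIntegral_ge_of_const_le measurableSet_ball measure_ball_lt_top.ne hpt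
          hint.integrableOn
    _ ≤ lam ^ 2 * ∫ w, QnC n (lam ^ 3 * s) (lam * w) ^ 2 :=
        mul_le_mul_of_nonneg_left
          (setIntegral_le_integral hint (ae_of_all _ fun _ => sq_nonneg _)) (by positivity)

theorem tendsto_atTop_of_mul_le_comp_pow {f : ℝ → ℝ} {k : ℕ} (hk : k ≠ 0) {K : ℝ} (hK : 0 < K)
    (h : ∀ μ : ℝ, 1 ≤ μ → K * μ ≤ f (μ ^ k)) : Tendsto f atTop atTop := by
  refine tendsto_atTop_mono' atTop ?_
    ((tendsto_rpow_atTop (inv_pos.2 (Nat.cast_pos.2 (Nat.pos_of_ne_zero hk)))).const_mul_atTop hK)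
  filter_upwards [eventually_ge_atTop 1] with t ht
  simpa [Real.rpow_inv_natCast_pow (zero_le_one.trans ht) hk] using
    h (t ^ (k⁻¹ : ℝ)) (Real.one_le_rpow ht (by positivity))

theorem stmt17 (n : ℕ) (hn : 3 ≤ n) :
    Tendsto (fun t : ℝ => ∫ p : ℝ × ℝ, (Qn n t p.1 p.2) ^ 2) atTop atTop ∧
    Tendsto (fun t : ℝ => ∫ p : ℝ × ℝ, (Qn n t p.1 p.2) ^ 2) atBot atTop := by
  simp only [integral_sq_Qn_eq]
  obtain ⟨k, hk, K, hK, hforward⟩ := exists_mul_le_integral_sq_QnC hn one_ne_zero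
  obtain ⟨k', hk', K', hK', hbackward⟩ :=
    exists_mul_le_integral_sq_QnC hn (neg_ne_zero.2 one_ne_zero)
  refine ⟨tendsto_atTop_of_mul_le_comp_pow hk hK (by simpa using hforward), ?_⟩
  have := tendsto_atTop_of_mul_le_comp_pow (f := fun t => ∫ z : ℂ, QnC n (-t) z ^ 2) hk' hK'
    (by simpa using hbackward)
  simpa [Function.comp_def] using this.comp tendsto_neg_atBot_atTop
end
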